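/- For 0 < θ < π/4 with 2cos²θ ≥ 1.8, let f_θ(1) denote the image of the boundary point 1 under the hyperbolic rotation of angle 1 (radian) about z_θ = (1+e^{2iθ})/2. Then f_θ(1) = cos(1/2)·cos(θ)/cos(1/2 + θ), and this value is strictly less than 5/4. -/

import Mathlib

/-!
Write `w = exp (θ i)`, so that `z = (1 + w²) / 2 = cos θ · w`, `1 - z = -i sin θ · w`, and `z̄`, `1 - z̄`
are the conjugates. Conjugating `diag(λ, λ⁻¹)` by `[[z̄, z], [1, 1]]` sends `1` to
`(z̄(1 - z)λ - z(1 - z̄)λ⁻¹) / ((1 - z)λ - (1 - z̄)λ⁻¹)`, and in this fraction the factor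
`-2i sin θ` cancels, leaving `cos α cos θ / cos (α + θ)` for `λ = exp (α i)`.
For the bound, `cos² θ ≥ 9/10` gives `tan θ ≤ 1/3`, while `tan (1/2) < 4/7`; hence
`5 tan (1/2) tan θ < 1`, which is `cos (1/2) cos θ < (5/4) cos (1/2 + θ)`.
-/

open Complex ComplexConjugate

noncomputable section

def mobius (g : Matrix (Fin 2) (Fin 2) ℂ) (x : ℂ) : ℂ :=
  (g 0 0 * x + g 0 1) / (g 1 0 * x + g 1 1)

/-- The hyperbolic rotation of angle `2 * α` about `z`. -/
def hypRotation (z α : ℂ) : Matrix (Fin 2) (Fin 2) ℂ :=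
  !![conj z, z; 1, 1] * !![exp (α * I), 0; 0, exp (-α * I)] * (!![conj z, z; 1, 1])⁻¹

lemma mobius_conj_diagonal_one (a b l : ℂ) (hab : a ≠ b) :
    mobius (!![a, b; 1, 1] * !![l, 0; 0, l⁻¹] * (!![a, b; 1, 1])⁻¹) 1 =
      (a * (1 - b) * l - b * (1 - a) * l⁻¹) / ((1 - b) * l - (1 - a) * l⁻¹) := by
  have hab' : a - b ≠ 0 := sub_ne_zero.2 hab
  have hinv : (!![a, b; 1, 1])⁻¹ = (a - b)⁻¹ • !![1, -b; -1, a] := by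
    refine Matrix.inv_eq_right_inv ?_
    ext i j
    fin_cases i <;> fin_cases j <;> simp <;> field_simp <;> ring
  have hg : !![a, b; 1, 1] * !![l, 0; 0, l⁻¹] * (!![a, b; 1, 1])⁻¹ = (a - b)⁻¹ •
      !![a * l - b * l⁻¹, -(a * b) * l + a * b * l⁻¹; l - l⁻¹, -b * l + a * l⁻¹] := by
    simp only [hinv, Matrix.mul_smul, Matrix.mul_fin_two]
    congr 1
    ext i j
    fin_cases i <;> fin_cases j <;> simp <;> ring
  simp only [mobius, hg, Matrix.smul_apply, smul_eq_mul, Matrix.of_apply, Matrix.cons_val',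
    Matrix.cons_val_zero, Matrix.cons_val_one, Matrix.empty_val', Matrix.cons_val_fin_one]
  rw [mul_one, mul_one, ← mul_add, ← mul_add, mul_div_mul_left _ _ (inv_ne_zero hab')]
  congr 1 <;> ring

lemma exp_mul_I_add_inv (x : ℂ) : exp (x * I) + (exp (x * I))⁻¹ = 2 * cos x := by
  rw [← exp_neg, ← neg_mul, two_cos]

lemma exp_mul_I_inv_sub (x : ℂ) : (exp (x * I))⁻¹ - exp (x * I) = -2 * I * sin x := by
  rw [← exp_neg, ← neg_mul]
  linear_combination I * two_sin x + (exp (-x * I) - exp (x * I)) * I_sq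

lemma conj_exp_ofReal_mul_I (x : ℝ) : conj (exp (x * I)) = (exp (x * I))⁻¹ := by
  rw [← exp_conj, map_mul, conj_ofReal, conj_I, mul_neg, exp_neg]

lemma mobius_hypRotation_one (θ : ℝ) (α : ℂ) (hs : Real.sin θ ≠ 0) (hc : Real.cos θ ≠ 0) :
    mobius (hypRotation ((1 + exp (2 * θ * I)) / 2) α) 1 = cos α * cos θ / cos (α + θ) := by
  set u := exp (θ * I) with hu
  set l := exp (α * I) with hl
  have hu0 : u ≠ 0 := exp_ne_zero _
  have hz : (1 + exp (2 * θ * I)) / 2 = (1 + u ^ 2) / 2 := by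
    rw [hu, ← exp_nat_mul]; push_cast; ring_nf
  have hzc : conj ((1 + u ^ 2) / 2) = (1 + u⁻¹ ^ 2) / 2 := by
    simp [hu, conj_exp_ofReal_mul_I, map_ofNat]
  have hsub : u⁻¹ - u ≠ 0 := by
    rw [hu, exp_mul_I_inv_sub]
    exact mul_ne_zero (by simp) (by exact_mod_cast hs)
  have hadd : u + u⁻¹ ≠ 0 := by
    rw [hu, exp_mul_I_add_inv]
    exact mul_ne_zero two_ne_zero (by exact_mod_cast hc)
  have hcα : cos α = (l + l⁻¹) / 2 := by rw [hl, exp_mul_I_add_inv]; ring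
  have hcθ : cos θ = (u + u⁻¹) / 2 := by rw [hu, exp_mul_I_add_inv]; ring
  have hcαθ : cos (α + θ) = (l * u + (l * u)⁻¹) / 2 := by
    rw [hl, hu, ← exp_add, ← add_mul, exp_mul_I_add_inv]; ring
  have hne : (1 + u⁻¹ ^ 2) / 2 ≠ (1 + u ^ 2) / 2 := by
    intro h
    apply mul_ne_zero hsub hadd
    linear_combination 2 * h
  have hnum : (1 + u⁻¹ ^ 2) / 2 * (1 - (1 + u ^ 2) / 2) * l
      - (1 + u ^ 2) / 2 * (1 - (1 + u⁻¹ ^ 2) / 2) * l⁻¹ = (u⁻¹ - u) * (cos α * cos θ) := by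
    rw [hcα, hcθ]; field_simp; ring
  have hden : (1 - (1 + u ^ 2) / 2) * l - (1 - (1 + u⁻¹ ^ 2) / 2) * l⁻¹
      = (u⁻¹ - u) * cos (α + θ) := by
    rw [hcαθ]; field_simp; ring
  rw [hypRotation, hz, hzc, neg_mul, exp_neg, ← hl, mobius_conj_diagonal_one _ _ _ hne, hnum, hden,
    mul_div_mul_left _ _ hsub]

end

lemma three_mul_sin_le_cos (θ : ℝ) (hc : 0 ≤ Real.cos θ) (h : 9 / 10 ≤ Real.cos θ ^ 2) :
    3 * Real.sin θ ≤ Real.cos θ := by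
  nlinarith [Real.sin_sq_add_cos_sq θ]

lemma five_mul_sin_half_lt : 5 * Real.sin (1 / 2) < 3 * Real.cos (1 / 2) := by
  have hs : Real.sin (1 / 2) < 1 / 2 := Real.sin_lt (by norm_num)
  have hc : 1 - (1 / 2) ^ 2 / 2 < Real.cos (1 / 2) := Real.one_sub_sq_div_two_lt_cos (by norm_num)
  linarith

lemma cos_half_mul_cos_div_cos_half_add_lt (θ : ℝ) (hc : 0 < Real.cos θ)
    (h : 3 * Real.sin θ ≤ Real.cos θ) :
    Real.cos (1 / 2) * Real.cos θ / Real.cos (1 / 2 + θ) < 5 / 4 := by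
  have hs : 0 < Real.sin (1 / 2) :=
    Real.sin_pos_of_pos_of_lt_pi (by norm_num) (by linarith [Real.pi_gt_three])
  have hsθ : 3 * Real.sin (1 / 2) * Real.sin θ ≤ Real.sin (1 / 2) * Real.cos θ := by
    nlinarith
  have htan : 5 * Real.sin (1 / 2) * Real.cos θ < 3 * Real.cos (1 / 2) * Real.cos θ :=
    mul_lt_mul_of_pos_right five_mul_sin_half_lt hc
  have hden : 0 < Real.cos (1 / 2 + θ) := by
    rw [Real.cos_add]; linarith [mul_pos hs hc]
  rw [div_lt_iff₀ hden, Real.cos_add]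
  linarith

theorem stmt_17 (θ : ℝ) (hθ : 0 < θ) (hθ2 : θ < Real.pi / 4)
    (hc : (1.8 : ℝ) ≤ 2 * Real.cos θ ^ 2) :
    (let zθ : ℂ := (1 + Complex.exp (2 * θ * Complex.I)) / 2
     let M : Matrix (Fin 2) (Fin 2) ℂ := !![starRingEnd ℂ zθ, zθ; 1, 1]
     let D : Matrix (Fin 2) (Fin 2) ℂ :=
       !![Complex.exp (Complex.I / 2), 0; 0, Complex.exp (-Complex.I / 2)]
     let g : Matrix (Fin 2) (Fin 2) ℂ := M * D * M⁻¹
     (g 0 0 * 1 + g 0 1) / (g 1 0 * 1 + g 1 1) =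
       ((Real.cos (1 / 2) * Real.cos θ / Real.cos (1 / 2 + θ) : ℝ) : ℂ)) ∧
    Real.cos (1 / 2) * Real.cos θ / Real.cos (1 / 2 + θ) < 5 / 4 := by
  have hcos : 0 < Real.cos θ :=
    Real.cos_pos_of_mem_Ioo ⟨by linarith [Real.pi_pos], by linarith [Real.pi_pos]⟩
  have hsin : 0 < Real.sin θ := Real.sin_pos_of_pos_of_lt_pi hθ (by linarith [Real.pi_pos])
  refine ⟨?_, cos_half_mul_cos_div_cos_half_add_lt θ hcos
    (three_mul_sin_le_cos θ hcos.le (by linarith))⟩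
  rw [show I / 2 = (1 / 2 : ℂ) * I by ring, show -I / 2 = -(1 / 2 : ℂ) * I by ring]
  refine (mobius_hypRotation_one θ (1 / 2) hsin.ne' hcos.ne').trans ?_
  push_cast
  rfl
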